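/- Let H be a Hopf algebra and J a normalized twist. Then Sᴶ(a) = Q_J⁻¹·S(a)·Q_J satisfies the left antipode axiom for Δᴶ: m∘(Sᴶ ⊗ id)∘Δᴶ(a) = ε(a)·1 for all a ∈ H. -/

import Mathlib

open TensorProduct

noncomputable section
variable (K B : Type*) [Field K] [Ring B] [Bialgebra K B]

/-- `ε ⊗ id : B ⊗ B → B`. -/
def epsId : B ⊗[K] B →ₐ[K] B :=
  (Algebra.TensorProduct.lid K B).toAlgHom.comp
    (Algebra.TensorProduct.map (Bialgebra.counitAlgHom K B) (AlgHom.id K B))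

/-- `id ⊗ ε : B ⊗ B → B`. -/
def idEps : B ⊗[K] B →ₐ[K] B :=
  (Algebra.TensorProduct.rid K K B).toAlgHom.comp
    (Algebra.TensorProduct.map (AlgHom.id K B) (Bialgebra.counitAlgHom K B))

/-- `Δ ⊗ id`, landing in `B ⊗ (B ⊗ B)`. -/
def comulId : B ⊗[K] B →ₐ[K] B ⊗[K] (B ⊗[K] B) :=
  (Algebra.TensorProduct.assoc K K K B B B).toAlgHom.comp
    (Algebra.TensorProduct.map (Bialgebra.comulAlgHom K B) (AlgHom.id K B))

/-- `id ⊗ Δ`, landing in `B ⊗ (B ⊗ B)`. -/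
def idComul : B ⊗[K] B →ₐ[K] B ⊗[K] (B ⊗[K] B) :=
  Algebra.TensorProduct.map (AlgHom.id K B) (Bialgebra.comulAlgHom K B)

/-- The cocycle condition `(Δ ⊗ id)(J)·(J ⊗ 1) = (id ⊗ Δ)(J)·(1 ⊗ J)` for a twist. -/
def IsTwist (J : B ⊗[K] B) : Prop :=
  comulId K B J * (Algebra.TensorProduct.assoc K K K B B B (J ⊗ₜ 1)) =
    idComul K B J * ((1 : B) ⊗ₜ J)

/-- Normalization `(ε ⊗ id)(J) = (id ⊗ ε)(J) = 1`. -/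
def IsNormalized (J : B ⊗[K] B) : Prop :=
  epsId K B J = 1 ∧ idEps K B J = 1

/-- The twisted comultiplication `a ↦ J⁻¹·Δ(a)·J` (with `J'` playing the role of `J⁻¹`). -/
def comulJ (J' J : B ⊗[K] B) : B →ₗ[K] B ⊗[K] B :=
  LinearMap.mulLeft K J' ∘ₗ LinearMap.mulRight K J ∘ₗ Coalgebra.comul

end

noncomputable section
variable (K B : Type*) [Field K] [Ring B] [HopfAlgebra K B]

/-- The antipode as a linear map. -/
def anti : B →ₗ[K] B := HopfAlgebra.antipode (R := K) (A := B)

/-- `Q_J = Σ S(J⁽¹⁾)·J⁽²⁾`. -/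
def QJ (J : B ⊗[K] B) : B := LinearMap.mul' K B ((anti K B).rTensor B J)

/-- `Σ J'⁽¹⁾·S(J'⁽²⁾)`; for `J' = J⁻¹` this is the inverse of `Q_J`. -/
def QJinv (J' : B ⊗[K] B) : B := LinearMap.mul' K B ((anti K B).lTensor B J')

/-- The twisted antipode `a ↦ Q_J⁻¹·S(a)·Q_J` (with `J'` playing the role of `J⁻¹`). -/
def antiJ (J' J : B ⊗[K] B) : B →ₗ[K] B :=
  LinearMap.mulLeft K (QJinv K B J') ∘ₗ LinearMap.mulRight K (QJ K B J) ∘ₗ anti K B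

end

variable {K H : Type*} [Field K] [Ring H] [HopfAlgebra K H]

open Coalgebra HopfAlgebra

/-!
Because `S` is an anti-homomorphism, `c ◁ (x ⊗ y) = S(x)·c·y` is a right action of the algebra
`H ⊗ H` on `H`, with `1 ◁ Δ(a) = ε(a)` and `Q_J = 1 ◁ J`. Hence
`m (Sᴶ ⊗ id) (t) = Q_J⁻¹·(Q_J ◁ t)` and `Q_J ◁ (J⁻¹Δ(a)J) = ((1 ◁ JJ⁻¹) ◁ Δ(a)) ◁ J = ε(a)·Q_J`,
so everything reduces to `Q_J⁻¹·Q_J = 1`. For this, apply `x ⊗ y ⊗ z ↦ x·(Q_J ◁ (y ⊗ z))` to the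
cocycle identity `(J⁻¹ ⊗ 1)·(Δ ⊗ id)(J⁻¹) = (1 ⊗ J⁻¹)·(id ⊗ Δ)(J⁻¹)` satisfied by the inverse.
With the mirror left action `(x ⊗ y) ▷ c = x·c·S(y)`, for which `Q_J⁻¹ = J⁻¹ ▷ 1`, the left side
becomes `Q_J⁻¹·Q_J·(ε ⊗ id)(J⁻¹)` and the right side `(id ⊗ ε)(J⁻¹)`; and `J⁻¹` is normalized
because `J` is.
-/

lemma mul_rev_eq_of_mul_eq {M : Type*} [Monoid M] {a b c d a' b' c' d' : M}
    (ha : a * a' = 1) (hb : b * b' = 1) (hc : c' * c = 1) (hd : d' * d = 1)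
    (h : a * b = c * d) : b' * a' = d' * c' :=
  calc b' * a' = d' * c' * (c * d) * (b' * a') := by
        rw [mul_assoc d', ← mul_assoc c', hc, one_mul, hd, one_mul]
    _ = d' * c' * (a * (b * b') * a') := by rw [← h]; simp only [mul_assoc]
    _ = d' * c' := by rw [hb, mul_one, ha, mul_one]

section AntipodeActions

variable {R A : Type*} [CommSemiring R] [Semiring A] [HopfAlgebra R A]

variable (R) in
def antipodeActRight (c : A) : A ⊗[R] A →ₗ[R] A :=
  LinearMap.mul' R A ∘ₗ LinearMap.rTensor A (LinearMap.mulRight R c ∘ₗ antipode R)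

variable (R) in
def antipodeActLeft (c : A) : A ⊗[R] A →ₗ[R] A :=
  LinearMap.mul' R A ∘ₗ LinearMap.lTensor A (antipode R) ∘ₗ
    LinearMap.rTensor A (LinearMap.mulRight R c)

@[simp]
lemma antipodeActRight_tmul (c x y : A) :
    antipodeActRight R c (x ⊗ₜ y) = antipode R x * c * y := by
  simp [antipodeActRight]

@[simp]
lemma antipodeActLeft_tmul (c x y : A) :
    antipodeActLeft R c (x ⊗ₜ y) = x * c * antipode R y := by
  simp [antipodeActLeft]

lemma antipodeActRight_mul (c : A) (s t : A ⊗[R] A) :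
    antipodeActRight R c (s * t) = antipodeActRight R (antipodeActRight R c s) t := by
  induction t using TensorProduct.induction_on with
  | zero => simp
  | add t₁ t₂ h₁ h₂ => rw [mul_add, map_add, h₁, h₂, map_add]
  | tmul u v =>
    induction s using TensorProduct.induction_on with
    | zero => simp
    | add s₁ s₂ h₁ h₂ => simp only [add_mul, map_add, h₁, h₂, antipodeActRight_tmul, mul_add]
    | tmul x y => simp [antipode_mul_antidistrib, mul_assoc]

lemma antipodeActLeft_mul (c : A) (s t : A ⊗[R] A) :
    antipodeActLeft R c (s * t) = antipodeActLeft R (antipodeActLeft R c t) s := by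
  induction s using TensorProduct.induction_on with
  | zero => simp
  | add s₁ s₂ h₁ h₂ => rw [add_mul, map_add, h₁, h₂, map_add]
  | tmul x y =>
    induction t using TensorProduct.induction_on with
    | zero => simp
    | add t₁ t₂ h₁ h₂ => simp only [mul_add, map_add, h₁, h₂, antipodeActLeft_tmul, add_mul]
    | tmul u v => simp [antipode_mul_antidistrib, mul_assoc]

lemma antipodeActRight_one (c : A) : antipodeActRight R c 1 = c := by
  simp [Algebra.TensorProduct.one_def]

lemma antipodeActRight_algebraMap (r : R) (t : A ⊗[R] A) :
    antipodeActRight R (algebraMap R A r) t = r • antipodeActRight R 1 t := by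
  induction t using TensorProduct.induction_on with
  | zero => simp
  | add t₁ t₂ h₁ h₂ => rw [map_add, h₁, h₂, map_add, smul_add]
  | tmul x y => simp [Algebra.algebraMap_eq_smul_one]

lemma antipodeActLeft_algebraMap (r : R) (t : A ⊗[R] A) :
    antipodeActLeft R (algebraMap R A r) t = r • antipodeActLeft R 1 t := by
  induction t using TensorProduct.induction_on with
  | zero => simp
  | add t₁ t₂ h₁ h₂ => rw [map_add, h₁, h₂, map_add, smul_add]
  | tmul x y => simp [Algebra.algebraMap_eq_smul_one]

lemma antipodeActRight_one_eq (t : A ⊗[R] A) :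
    antipodeActRight R 1 t = LinearMap.mul' R A ((antipode R).rTensor A t) := by
  simp [antipodeActRight]

lemma antipodeActLeft_one_eq (t : A ⊗[R] A) :
    antipodeActLeft R 1 t = LinearMap.mul' R A ((antipode R).lTensor A t) := by
  simp [antipodeActLeft]

lemma antipodeActRight_one_comul (a : A) :
    antipodeActRight R 1 (comul a) = algebraMap R A (counit a) := by
  rw [antipodeActRight_one_eq, mul_antipode_rTensor_comul_apply]

lemma antipodeActLeft_one_comul (a : A) :
    antipodeActLeft R 1 (comul a) = algebraMap R A (counit a) := by
  rw [antipodeActLeft_one_eq, mul_antipode_lTensor_comul_apply]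

end AntipodeActions

section Twist

variable {B : Type*} [Ring B] [Bialgebra K B]

lemma IsNormalized.of_mul_eq_one {J J' : B ⊗[K] B} (hJ : J * J' = 1) (hn : IsNormalized K B J) :
    IsNormalized K B J' :=
  ⟨by simpa [hn.1] using congrArg (epsId K B) hJ, by simpa [hn.2] using congrArg (idEps K B) hJ⟩

lemma IsTwist.inv {J J' : B ⊗[K] B} (hJ : J * J' = 1) (hJ' : J' * J = 1) (hc : IsTwist K B J) :
    Algebra.TensorProduct.assoc K K K B B B (J' ⊗ₜ 1) * comulId K B J' =
      ((1 : B) ⊗ₜ J') * idComul K B J' :=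
  mul_rev_eq_of_mul_eq (by rw [← map_mul, hJ, map_one])
    (by rw [← map_mul, Algebra.TensorProduct.tmul_mul_tmul, hJ, one_mul,
      ← Algebra.TensorProduct.one_def, map_one])
    (by rw [← map_mul, hJ', map_one])
    (by rw [Algebra.TensorProduct.tmul_mul_tmul, hJ', one_mul, ← Algebra.TensorProduct.one_def])
    hc

end Twist

lemma mul'_lTensor_antipodeActRight_assoc (c : H) (s : H ⊗[K] H) (z : H) :
    LinearMap.mul' K H (LinearMap.lTensor H (antipodeActRight K c)
      (Algebra.TensorProduct.assoc K K K H H H (s ⊗ₜ z))) = antipodeActLeft K 1 s * c * z := by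
  induction s using TensorProduct.induction_on with
  | zero => simp
  | add s₁ s₂ h₁ h₂ => rw [TensorProduct.add_tmul, map_add, map_add, map_add, h₁, h₂, map_add,
      add_mul, add_mul]
  | tmul x y => simp [mul_assoc]

lemma mul'_lTensor_antipodeActRight_assoc_mul_comulId (c : H) (s t : H ⊗[K] H) :
    LinearMap.mul' K H (LinearMap.lTensor H (antipodeActRight K c)
      (Algebra.TensorProduct.assoc K K K H H H (s ⊗ₜ 1) * comulId K H t)) =
      antipodeActLeft K 1 s * c * epsId K H t := by
  induction t using TensorProduct.induction_on with
  | zero => simp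
  | add t₁ t₂ h₁ h₂ => rw [map_add, mul_add, map_add, map_add, h₁, h₂, map_add, mul_add]
  | tmul x y =>
    have hΔ : comulId K H (x ⊗ₜ y) = Algebra.TensorProduct.assoc K K K H H H (comul x ⊗ₜ y) := by
      simp [comulId]
    have hε : epsId K H (x ⊗ₜ y) = counit (R := K) x • y := by simp [epsId]
    rw [hΔ, hε, ← map_mul, Algebra.TensorProduct.tmul_mul_tmul, one_mul,
      mul'_lTensor_antipodeActRight_assoc, antipodeActLeft_mul, antipodeActLeft_one_comul,
      antipodeActLeft_algebraMap, smul_mul_assoc, smul_mul_assoc, mul_smul_comm]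

lemma mul'_lTensor_antipodeActRight_tmul_mul_idComul {c : H} {s : H ⊗[K] H}
    (h : antipodeActRight K c s = 1) (t : H ⊗[K] H) :
    LinearMap.mul' K H (LinearMap.lTensor H (antipodeActRight K c)
      (((1 : H) ⊗ₜ s) * idComul K H t)) = idEps K H t := by
  induction t using TensorProduct.induction_on with
  | zero => simp
  | add t₁ t₂ h₁ h₂ => rw [map_add, mul_add, map_add, map_add, h₁, h₂, map_add]
  | tmul x y =>
    have hΔ : idComul K H (x ⊗ₜ y) = x ⊗ₜ comul (R := K) y := by simp [idComul]
    have hε : idEps K H (x ⊗ₜ y) = counit (R := K) y • x := by simp [idEps]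
    rw [hΔ, hε, Algebra.TensorProduct.tmul_mul_tmul, one_mul, LinearMap.lTensor_tmul,
      LinearMap.mul'_apply, antipodeActRight_mul, h, antipodeActRight_one_comul,
      Algebra.algebraMap_eq_smul_one, mul_smul_comm, mul_one]

lemma QJ_eq_antipodeActRight (J : H ⊗[K] H) : QJ K H J = antipodeActRight K 1 J :=
  (antipodeActRight_one_eq J).symm

lemma QJinv_eq_antipodeActLeft (J' : H ⊗[K] H) : QJinv K H J' = antipodeActLeft K 1 J' :=
  (antipodeActLeft_one_eq J').symm

lemma antipodeActRight_QJ_mul {J J' : H ⊗[K] H} (hJ : J * J' = 1) (t : H ⊗[K] H) :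
    antipodeActRight K (QJ K H J) (J' * t) = antipodeActRight K 1 t := by
  rw [QJ_eq_antipodeActRight, ← antipodeActRight_mul, ← mul_assoc, hJ, one_mul]

lemma QJinv_mul_QJ {J J' : H ⊗[K] H} (hJ : J * J' = 1) (hJ' : J' * J = 1)
    (hc : IsTwist K H J) (hn : IsNormalized K H J) : QJinv K H J' * QJ K H J = 1 := by
  have hn' := hn.of_mul_eq_one hJ
  have h := congrArg (fun u => LinearMap.mul' K H (LinearMap.lTensor H
    (antipodeActRight K (QJ K H J)) u)) (hc.inv hJ hJ')
  have hQJ' : antipodeActRight K (QJ K H J) J' = 1 := by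
    rw [← mul_one J', antipodeActRight_QJ_mul hJ, antipodeActRight_one]
  simp only [mul'_lTensor_antipodeActRight_assoc_mul_comulId,
    mul'_lTensor_antipodeActRight_tmul_mul_idComul hQJ', hn'.1, hn'.2, mul_one] at h
  rwa [QJinv_eq_antipodeActLeft]

lemma mul'_rTensor_antiJ (J' J t : H ⊗[K] H) :
    LinearMap.mul' K H ((antiJ K H J' J).rTensor H t) =
      QJinv K H J' * antipodeActRight K (QJ K H J) t := by
  induction t using TensorProduct.induction_on with
  | zero => simp
  | add t₁ t₂ h₁ h₂ => rw [map_add, map_add, h₁, h₂, map_add, mul_add]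
  | tmul x y => simp [antiJ, anti, mul_assoc]

theorem twisted_antipode_left (J J' : H ⊗[K] H)
    (hJ : J * J' = 1) (hJ' : J' * J = 1) (hc : IsTwist K H J) (hn : IsNormalized K H J) :
    ∀ a : H, LinearMap.mul' K H ((antiJ K H J' J).rTensor H (comulJ K H J' J a)) =
      algebraMap K H (Bialgebra.counitAlgHom K H a) := by
  intro a
  calc LinearMap.mul' K H ((antiJ K H J' J).rTensor H (comulJ K H J' J a))
      = QJinv K H J' * antipodeActRight K (QJ K H J) (J' * (comul a * J)) :=
        mul'_rTensor_antiJ J' J _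
    _ = QJinv K H J' * (counit (R := K) a • antipodeActRight K 1 J) := by
        rw [antipodeActRight_QJ_mul hJ, antipodeActRight_mul, antipodeActRight_one_comul,
          antipodeActRight_algebraMap]
    _ = counit (R := K) a • (QJinv K H J' * QJ K H J) := by
        rw [QJ_eq_antipodeActRight, mul_smul_comm]
    _ = algebraMap K H (Bialgebra.counitAlgHom K H a) := by
        rw [QJinv_mul_QJ hJ hJ' hc hn, Bialgebra.counitAlgHom_apply,
          Algebra.algebraMap_eq_smul_one]
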